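/- arXiv:1506.04996 — 6 statements merged into one kernel-verified Lean document; each statement's English description precedes it below -/
import Mathlib

section
/- Let A be a finite-dimensional Leibniz algebra over an infinite field, H a generalized Frattini ideal of A, and N an ideal of A contained in H. Then N is also a generalized Frattini ideal of A. -/
namespace Leib

variable (F : Type*) [Field F] {A : Type*} [NonUnitalNonAssocRing A]
  [Module F A] [SMulCommClass F A A] [IsScalarTower F A A]

/-- `S` is a subalgebra: a submodule closed under multiplication. -/
def IsSubalg (S : Submodule F A) : Prop := ∀ x ∈ S, ∀ y ∈ S, x * y ∈ S

/-- `S` is a (two-sided) ideal of the Leibniz algebra `A`. -/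
def IsIdeal (S : Submodule F A) : Prop := ∀ a : A, ∀ s ∈ S, a * s ∈ S ∧ s * a ∈ S

/-- The normalizer `N_A(C)` of a subspace `C` in `A`. -/
def normalizer (C : Submodule F A) : Submodule F A where
  carrier := {a | ∀ c ∈ C, a * c ∈ C ∧ c * a ∈ C}
  zero_mem' := by intro c hc; simp [C.zero_mem]
  add_mem' := by
    intro a b ha hb c hc
    exact ⟨by rw [add_mul]; exact C.add_mem (ha c hc).1 (hb c hc).1,
           by rw [mul_add]; exact C.add_mem (ha c hc).2 (hb c hc).2⟩
  smul_mem' := by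
    intro r a ha c hc
    exact ⟨by rw [smul_mul_assoc]; exact C.smul_mem r (ha c hc).1,
           by rw [mul_smul_comm]; exact C.smul_mem r (ha c hc).2⟩

/-- The span of all products `s * t` with `s ∈ S`, `t ∈ T`. -/
def mulSpan (S T : Submodule F A) : Submodule F A :=
  Submodule.span F {x | ∃ s ∈ S, ∃ t ∈ T, x = s * t}

/-- The (left-normed) lower central series of a subspace `S`:
`S, S·S, S·(S·S), …`. -/
def lcs (S : Submodule F A) : ℕ → Submodule F A
  | 0 => S
  | n + 1 => mulSpan F S (lcs S n)

/-- `S` is nilpotent. -/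
def IsNilp (S : Submodule F A) : Prop := ∃ n, lcs F S n = ⊥

/-- The derived series of a subspace `S`. -/
def derSeries (S : Submodule F A) : ℕ → Submodule F A
  | 0 => S
  | n + 1 => mulSpan F (derSeries S n) (derSeries S n)

/-- `S` is solvable. -/
def IsSolv (S : Submodule F A) : Prop := ∃ n, derSeries F S n = ⊥

/-- `C` is a Cartan subalgebra of the subalgebra `K`: a nilpotent subalgebra of `K`
that is self-normalizing in `K`. -/
def IsCartanOf (K C : Submodule F A) : Prop :=
  C ≤ K ∧ IsSubalg F C ∧ IsNilp F C ∧ normalizer F C ⊓ K = C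

/-- `H` is a generalized Frattini ideal (Cartan-subalgebra definition): `H` is proper and
whenever `A = H + N_A(C)` for `C` a Cartan subalgebra of an ideal `K` of `A`,
it follows that `A = N_A(C)`. -/
def GenFrattiniC (H : Submodule F A) : Prop :=
  H ≠ ⊤ ∧ ∀ K C : Submodule F A, IsIdeal F K → IsCartanOf F K C →
    H ⊔ normalizer F C = ⊤ → normalizer F C = ⊤

/-- `H` is a generalized Frattini ideal (nilpotency characterization): `H` is proper and
every ideal `J ⊇ H` with `J/H` nilpotent is nilpotent. -/
def GenFrattiniN (H : Submodule F A) : Prop :=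
  H ≠ ⊤ ∧ ∀ J : Submodule F A, IsIdeal F J → H ≤ J →
    (∃ n, lcs F J n ≤ H) → IsNilp F J

/-- The center `Z(A)`. -/
def center : Submodule F A where
  carrier := {z | ∀ a : A, z * a = 0 ∧ a * z = 0}
  zero_mem' := by intro a; simp
  add_mem' := by
    intro x y hx hy a
    exact ⟨by rw [add_mul, (hx a).1, (hy a).1, add_zero],
           by rw [mul_add, (hx a).2, (hy a).2, add_zero]⟩
  smul_mem' := by
    intro r x hx a
    exact ⟨by rw [smul_mul_assoc, (hx a).1, smul_zero],
           by rw [mul_smul_comm, (hx a).2, smul_zero]⟩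

/-- `M` is a maximal subalgebra of `A`. -/
def IsMaxSubalg (M : Submodule F A) : Prop :=
  IsSubalg F M ∧ M ≠ ⊤ ∧ ∀ S : Submodule F A, IsSubalg F S → M < S → S = ⊤

/-- `I` is a maximal ideal of `A`. -/
def IsMaxIdeal (I : Submodule F A) : Prop :=
  IsIdeal F I ∧ I ≠ ⊤ ∧ ∀ J : Submodule F A, IsIdeal F J → I < J → J = ⊤

/-- `K` is a primitive ideal: `Φ(A/K) = 0`, `A/K` has a unique minimal ideal, and
`dim (A/K) > 1`.  (Ideals and maximal subalgebras of `A/K` are stated via the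
correspondence with ideals and maximal subalgebras of `A` containing `K`.) -/
def IsPrimitiveIdeal (K : Submodule F A) : Prop :=
  IsIdeal F K ∧
  (∀ J : Submodule F A, IsIdeal F J → K ≤ J →
      (∀ M : Submodule F A, IsMaxSubalg F M → K ≤ M → J ≤ M) → J = K) ∧
  (∃! B : Submodule F A, IsIdeal F B ∧ K < B ∧
      ∀ B' : Submodule F A, IsIdeal F B' → K < B' → ¬ B' < B) ∧
  1 < Module.finrank F (A ⧸ K)

end Leib

open Leib in
theorem genFrattini_of_le_general
    {F : Type*} [Field F] {A : Type*} [NonUnitalNonAssocRing A]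
    [Module F A] [SMulCommClass F A A] [IsScalarTower F A A]
    (H N : Submodule F A) (hGF : GenFrattiniC F H)
    (hNH : N ≤ H) :
    GenFrattiniC F N := by
  obtain ⟨hH_ne_top, hH_cartan⟩ := hGF
  refine ⟨fun hN_top => hH_ne_top (top_unique (hN_top ▸ hNH)), fun K C hK hC hsup => ?_⟩
  exact hH_cartan K C hK hC (top_unique (hsup ▸ sup_le_sup_right hNH _))

open Leib in
/-- an ideal contained in a generalized Frattini ideal is generalized
Frattini. -/
theorem genFrattini_of_le
    {F : Type*} [Field F] [Infinite F] {A : Type*} [NonUnitalNonAssocRing A]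
    [Module F A] [SMulCommClass F A A] [IsScalarTower F A A] [Module.Finite F A]
    (leib : ∀ a b c : A, a * (b * c) = a * b * c + b * (a * c))
    (H N : Submodule F A) (hH : IsIdeal F H) (hGF : GenFrattiniC F H)
    (hN : IsIdeal F N) (hNH : N ≤ H) :
    GenFrattiniC F N :=
  genFrattini_of_le_general H N hGF hNH
end

section
/- Let A be a finite-dimensional Leibniz algebra over an infinite field and H a generalized Frattini ideal of A. If H + Z(A) is a proper subalgebra of A, where Z(A) is the center, then H + Z(A) is a generalized Frattini ideal of A. -/
namespace Leib

variable {F : Type*} [Field F] {A : Type*} [NonUnitalNonAssocRing A]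
  [Module F A] [SMulCommClass F A A] [IsScalarTower F A A]

theorem center_le_normalizer (C : Submodule F A) : center F ≤ normalizer F C :=
  fun z hz c _ => ⟨by rw [(hz c).1]; exact C.zero_mem, by rw [(hz c).2]; exact C.zero_mem⟩

/-- A subspace lying in every normalizer is absorbed into each sum `H + N_A(C)`, so the
defining implication of `H` transfers verbatim. -/
theorem genFrattiniC_sup_of_le_normalizer {H Z : Submodule F A} (hH : GenFrattiniC F H)
    (hZ : ∀ C : Submodule F A, Z ≤ normalizer F C) (hprop : H ⊔ Z ≠ ⊤) :
    GenFrattiniC F (H ⊔ Z) := by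
  refine ⟨hprop, fun K C hK hC htop => hH.2 K C hK hC ?_⟩
  rwa [sup_assoc, sup_eq_right.mpr (hZ C)] at htop

end Leib

open Leib in
theorem genFrattini_sup_center_general
    {F : Type*} [Field F] {A : Type*} [NonUnitalNonAssocRing A]
    [Module F A] [SMulCommClass F A A] [IsScalarTower F A A]
    (H : Submodule F A) (hGF : GenFrattiniC F H)
    (hprop : H ⊔ center F ≠ (⊤ : Submodule F A)) :
    GenFrattiniC F (H ⊔ center F) :=
  genFrattiniC_sup_of_le_normalizer hGF center_le_normalizer hprop

open Leib in
/-- if `H` is generalized Frattini and `H + Z(A)` is proper,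
then `H + Z(A)` is generalized Frattini. -/
theorem genFrattini_sup_center
    {F : Type*} [Field F] [Infinite F] {A : Type*} [NonUnitalNonAssocRing A]
    [Module F A] [SMulCommClass F A A] [IsScalarTower F A A] [Module.Finite F A]
    (leib : ∀ a b c : A, a * (b * c) = a * b * c + b * (a * c))
    (H : Submodule F A) (hH : IsIdeal F H) (hGF : GenFrattiniC F H)
    (hprop : H ⊔ center F ≠ (⊤ : Submodule F A)) :
    GenFrattiniC F (H ⊔ center F) :=
  genFrattini_sup_center_general H hGF hprop
end

section
/- Every proper ideal of a finite-dimensional nilpotent Leibniz algebra A is a generalized Frattini ideal of A. -/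
/-! In a Leibniz algebra the identity `(ab)c = a(bc) - b(ac)` makes the lower central series a
filtration, `A^m A^n ⊆ A^(m+n+1)`. So if `C ≤ K` is self-normalizing in the ideal `K`, then
`A^(n+1) ∩ K ≤ C` forces `A^n ∩ K ≤ C`, and descending from `A^N = 0` gives `K ≤ C`. A Cartan
subalgebra of an ideal of a nilpotent algebra is therefore the ideal itself, whose normalizer
is all of `A`. -/

namespace Leib

variable {F : Type*} [Field F] {A : Type*} [NonUnitalNonAssocRing A]
  [Module F A] [IsScalarTower F A A]

theorem mul_mem_lcs (leib : ∀ a b c : A, a * (b * c) = a * b * c + b * (a * c))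
    (S : Submodule F A) {m n : ℕ} {x y : A} (hx : x ∈ lcs F S m) (hy : y ∈ lcs F S n) :
    x * y ∈ lcs F S (m + n + 1) := by
  induction m generalizing x n y with
  | zero =>
    rw [Nat.zero_add]
    exact Submodule.subset_span ⟨x, hx, y, hy, rfl⟩
  | succ m ih =>
    induction hx using Submodule.span_induction with
    | mem x hx =>
      obtain ⟨a, ha, t, ht, rfl⟩ := hx
      rw [show a * t * y = a * (t * y) - t * (a * y) by rw [leib, add_sub_cancel_right]]
      refine Submodule.sub_mem _ ?_ ?_
      · have hty : t * y ∈ lcs F S (m + n + 1) := ih ht hy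
        have : a * (t * y) ∈ lcs F S (m + n + 1 + 1) :=
          Submodule.subset_span ⟨a, ha, t * y, hty, rfl⟩
        simpa [Nat.add_right_comm] using this
      · have hay : a * y ∈ lcs F S (n + 1) := Submodule.subset_span ⟨a, ha, y, hy, rfl⟩
        simpa [Nat.add_right_comm, Nat.add_assoc] using ih ht hay
    | zero => simp
    | add u v _ _ hu hv => rw [add_mul]; exact Submodule.add_mem _ hu hv
    | smul r u _ hu => rw [smul_mul_assoc]; exact Submodule.smul_mem _ r hu

variable [SMulCommClass F A A]

theorem lcs_inf_le_of_lcs_succ_inf_le (leib : ∀ a b c : A, a * (b * c) = a * b * c + b * (a * c))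
    {K C : Submodule F A} (hK : IsIdeal F K) (hC : normalizer F C ⊓ K = C) {n : ℕ}
    (hn : lcs F ⊤ (n + 1) ⊓ K ≤ C) : lcs F ⊤ n ⊓ K ≤ C := by
  rintro x ⟨hxn, hxK⟩
  rw [← hC]
  refine ⟨fun c hc => ⟨hn ⟨?_, (hK c x hxK).2⟩, hn ⟨?_, (hK c x hxK).1⟩⟩, hxK⟩
  · exact mul_mem_lcs (n := 0) leib ⊤ hxn (by simp [lcs])
  · simpa [Nat.add_comm] using mul_mem_lcs (m := 0) leib ⊤ (by simp [lcs]) hxn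

theorem eq_of_le_of_normalizer_inf_eq (leib : ∀ a b c : A, a * (b * c) = a * b * c + b * (a * c))
    (hA : IsNilp F (⊤ : Submodule F A)) {K C : Submodule F A} (hK : IsIdeal F K)
    (hCK : C ≤ K) (hC : normalizer F C ⊓ K = C) : C = K := by
  obtain ⟨N, hN⟩ := hA
  have descend : ∀ k n, n + k = N → lcs F ⊤ n ⊓ K ≤ C := by
    intro k
    induction k with
    | zero => intro n hn; rw [Nat.add_zero] at hn; subst hn; simp [hN]
    | succ k ih =>
      intro n hnk
      exact lcs_inf_le_of_lcs_succ_inf_le leib hK hC (ih (n + 1) (by omega))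
  exact le_antisymm hCK (by simpa [lcs] using descend N 0 (Nat.zero_add N))

theorem normalizer_eq_top_of_isIdeal {K : Submodule F A} (hK : IsIdeal F K) :
    normalizer F K = ⊤ :=
  eq_top_iff.mpr fun a _ c hc => hK a c hc

end Leib

open Leib in
theorem genFrattini_of_nilpotent_general
    {F : Type*} [Field F] {A : Type*} [NonUnitalNonAssocRing A]
    [Module F A] [SMulCommClass F A A] [IsScalarTower F A A]
    (leib : ∀ a b c : A, a * (b * c) = a * b * c + b * (a * c))
    (hA : IsNilp F (⊤ : Submodule F A))
    (H : Submodule F A) (hprop : H ≠ ⊤) :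
    GenFrattiniC F H := by
  refine ⟨hprop, fun K C hK hC _ => ?_⟩
  rw [eq_of_le_of_normalizer_inf_eq leib hA hK hC.1 hC.2.2.2]
  exact normalizer_eq_top_of_isIdeal hK

open Leib in
/-- every proper ideal of a finite-dimensional nilpotent Leibniz algebra
is generalized Frattini. -/
theorem genFrattini_of_nilpotent
    {F : Type*} [Field F] {A : Type*} [NonUnitalNonAssocRing A]
    [Module F A] [SMulCommClass F A A] [IsScalarTower F A A] [Module.Finite F A]
    (leib : ∀ a b c : A, a * (b * c) = a * b * c + b * (a * c))
    (hA : IsNilp F (⊤ : Submodule F A))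
    (H : Submodule F A) (hH : IsIdeal F H) (hprop : H ≠ ⊤) :
    GenFrattiniC F H :=
  genFrattini_of_nilpotent_general leib hA H hprop
end

section
/- There exists a 3-dimensional Lie algebra A with ideals H and K such that H and K are generalized Frattini ideals of A but H + K is not a generalized Frattini ideal of A. -/
namespace Leib

variable {F : Type*} [Field F] {A : Type*} [NonUnitalNonAssocRing A] [Module F A]

lemma mulSpan_le {S T U : Submodule F A} (h : ∀ s ∈ S, ∀ t ∈ T, s * t ∈ U) :
    mulSpan F S T ≤ U := by
  rw [mulSpan, Submodule.span_le]
  rintro _ ⟨s, hs, t, ht, rfl⟩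
  exact h s hs t ht

lemma isIdeal_top : IsIdeal F (⊤ : Submodule F A) :=
  fun _ _ _ => ⟨trivial, trivial⟩

lemma isIdeal_span_singleton [SMulCommClass F A A] [IsScalarTower F A A] {v : A}
    (hl : ∀ a : A, ∃ c : F, a * v = c • v) (hr : ∀ a : A, ∃ c : F, v * a = c • v) :
    IsIdeal F (F ∙ v) := by
  intro a s hs
  obtain ⟨r, rfl⟩ := Submodule.mem_span_singleton.1 hs
  obtain ⟨c, hc⟩ := hl a
  obtain ⟨d, hd⟩ := hr a
  rw [mul_smul_comm, smul_mul_assoc, hc, hd]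
  exact ⟨Submodule.smul_mem _ _ (Submodule.smul_mem _ _ (Submodule.mem_span_singleton_self v)),
    Submodule.smul_mem _ _ (Submodule.smul_mem _ _ (Submodule.mem_span_singleton_self v))⟩

lemma isNilp_of_mul_eq_zero {S : Submodule F A} (h : ∀ a ∈ S, ∀ b ∈ S, a * b = 0) :
    IsNilp F S :=
  ⟨1, eq_bot_iff.2 <| mulSpan_le fun a ha b hb => (Submodule.mem_bot F).2 (h a ha b hb)⟩

lemma mem_lcs_of_mul_eq_smul {J : Submodule F A} (hJ : IsIdeal F J) {s v : A} {c : F}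
    (hs : s ∈ J) (hc : c ≠ 0) (hsv : s * v = c • v) (n : ℕ) : v ∈ lcs F J n := by
  have hv : v = c⁻¹ • (s * v) := by rw [hsv, smul_smul, inv_mul_cancel₀ hc, one_smul]
  induction n with
  | zero => rw [hv]; exact J.smul_mem _ (hJ v s hs).2
  | succ n ih =>
    rw [hv]
    exact Submodule.smul_mem _ _ (Submodule.subset_span ⟨s, hs, v, ih, rfl⟩)

lemma eq_zero_of_forall_mem_lcs {S : Submodule F A} (hS : IsNilp F S) {v : A}
    (hv : ∀ n, v ∈ lcs F S n) : v = 0 := by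
  obtain ⟨n, hn⟩ := hS
  simpa [hn] using hv n

end Leib

namespace GenFrattiniSumExample

open Leib

/-- `a : L` stands for `a 0 • x + a 1 • y + a 2 • z`. -/
def L : Type := Fin 3 → ℝ

instance : AddCommGroup L := Pi.addCommGroup

noncomputable instance : Module ℝ L := Pi.module (Fin 3) (fun _ => ℝ) ℝ

instance : Mul L := ⟨fun a b => ![a 0 * b 2 - a 2 * b 0, a 2 * b 1 - a 1 * b 2, 0]⟩

@[ext]
lemma ext {a b : L} (h₀ : a 0 = b 0) (h₁ : a 1 = b 1) (h₂ : a 2 = b 2) : a = b :=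
  funext fun i => by fin_cases i <;> assumption

@[simp] lemma add_apply (a b : L) (i : Fin 3) : (a + b) i = a i + b i := rfl
@[simp] lemma zero_apply (i : Fin 3) : (0 : L) i = 0 := rfl
@[simp] lemma neg_apply (a : L) (i : Fin 3) : (-a) i = -a i := rfl
@[simp] lemma smul_apply (r : ℝ) (a : L) (i : Fin 3) : (r • a) i = r * a i := rfl
@[simp] lemma mul_apply_zero (a b : L) : (a * b) 0 = a 0 * b 2 - a 2 * b 0 := rfl
@[simp] lemma mul_apply_one (a b : L) : (a * b) 1 = a 2 * b 1 - a 1 * b 2 := rfl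
@[simp] lemma mul_apply_two (a b : L) : (a * b) 2 = 0 := rfl

noncomputable instance : NonUnitalNonAssocRing L :=
  { (inferInstance : AddCommGroup L), (inferInstance : Mul L) with
    left_distrib := fun _ _ _ => by ext <;> simp <;> ring
    right_distrib := fun _ _ _ => by ext <;> simp <;> ring
    zero_mul := fun _ => by ext <;> simp
    mul_zero := fun _ => by ext <;> simp }

instance : SMulCommClass ℝ L L := ⟨fun _ _ _ => by ext <;> simp <;> ring⟩

instance : IsScalarTower ℝ L L := ⟨fun _ _ _ => by ext <;> simp <;> ring⟩

lemma leibniz (a b c : L) : a * (b * c) = a * b * c + b * (a * c) := by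
  ext <;> simp <;> ring

lemma mul_self (a : L) : a * a = 0 := by
  ext <;> simp <;> ring

lemma finrank_eq_three : Module.finrank ℝ L = 3 :=
  Module.finrank_fin_fun ℝ

noncomputable def x : L := ![1, 0, 0]
noncomputable def y : L := ![0, 1, 0]
noncomputable def z : L := ![0, 0, 1]

@[simp] lemma x_apply (i : Fin 3) : x i = ![(1 : ℝ), 0, 0] i := rfl
@[simp] lemma y_apply (i : Fin 3) : y i = ![(0 : ℝ), 1, 0] i := rfl
@[simp] lemma z_apply (i : Fin 3) : z i = ![(0 : ℝ), 0, 1] i := rfl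

lemma mul_x (a : L) : a * x = -a 2 • x := by ext <;> simp
lemma x_mul (a : L) : x * a = a 2 • x := by ext <;> simp
lemma mul_y (a : L) : a * y = a 2 • y := by ext <;> simp
lemma y_mul (a : L) : y * a = -a 2 • y := by ext <;> simp

lemma mul_eq_smul_x_add_smul_y (a b : L) : a * b = (a * b) 0 • x + (a * b) 1 • y := by
  ext <;> simp

lemma mul_eq_zero_of_apply_two_eq_zero {a b : L} (ha : a 2 = 0) (hb : b 2 = 0) : a * b = 0 := by
  ext <;> simp [ha, hb]

lemma isIdeal_span_x : IsIdeal ℝ (ℝ ∙ x) :=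
  isIdeal_span_singleton (fun a => ⟨_, mul_x a⟩) (fun a => ⟨_, x_mul a⟩)

lemma isIdeal_span_y : IsIdeal ℝ (ℝ ∙ y) :=
  isIdeal_span_singleton (fun a => ⟨_, mul_y a⟩) (fun a => ⟨_, y_mul a⟩)

lemma x_notMem_span_y : x ∉ ℝ ∙ y := fun h => by
  obtain ⟨r, hr⟩ := Submodule.mem_span_singleton.1 h
  simpa using congrFun hr 0

lemma y_notMem_span_x : y ∉ ℝ ∙ x := fun h => by
  obtain ⟨r, hr⟩ := Submodule.mem_span_singleton.1 h
  simpa using congrFun hr 1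

lemma mem_lcs_of_apply_two_ne_zero {J : Submodule ℝ L} (hJ : IsIdeal ℝ J) {a : L} (ha : a ∈ J)
    (ha₂ : a 2 ≠ 0) (n : ℕ) : x ∈ lcs ℝ J n ∧ y ∈ lcs ℝ J n :=
  ⟨mem_lcs_of_mul_eq_smul hJ ha (neg_ne_zero.2 ha₂) (mul_x a) n,
    mem_lcs_of_mul_eq_smul hJ ha ha₂ (mul_y a) n⟩

lemma genFrattiniN_of_x_notMem_or_y_notMem {P : Submodule ℝ L} (hP : x ∉ P ∨ y ∉ P) :
    GenFrattiniN ℝ P := by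
  refine ⟨fun htop => ?_, fun J hJ _ ⟨n, hn⟩ => ?_⟩
  · rcases hP with h | h <;> exact h (htop ▸ Submodule.mem_top)
  by_cases hJ₂ : ∀ a ∈ J, a 2 = 0
  · exact isNilp_of_mul_eq_zero fun a ha b hb =>
      mul_eq_zero_of_apply_two_eq_zero (hJ₂ a ha) (hJ₂ b hb)
  push Not at hJ₂
  obtain ⟨a, ha, ha₂⟩ := hJ₂
  obtain ⟨hx, hy⟩ := mem_lcs_of_apply_two_ne_zero hJ ha ha₂ n
  rcases hP with h | h
  · exact absurd (hn hx) h
  · exact absurd (hn hy) h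

lemma not_genFrattiniN_sup : ¬ GenFrattiniN ℝ ((ℝ ∙ x) ⊔ (ℝ ∙ y)) := by
  rintro ⟨-, h⟩
  have hquot : lcs ℝ (⊤ : Submodule ℝ L) 1 ≤ (ℝ ∙ x) ⊔ (ℝ ∙ y) := by
    refine mulSpan_le fun a _ b _ => ?_
    rw [mul_eq_smul_x_add_smul_y a b]
    exact Submodule.add_mem_sup (Submodule.smul_mem _ _ (Submodule.mem_span_singleton_self x))
      (Submodule.smul_mem _ _ (Submodule.mem_span_singleton_self y))
  have hx_mem (n : ℕ) : x ∈ lcs ℝ (⊤ : Submodule ℝ L) n :=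
    (mem_lcs_of_apply_two_ne_zero isIdeal_top (Submodule.mem_top (x := z)) (by simp) n).1
  have hx : x = 0 := eq_zero_of_forall_mem_lcs (h ⊤ isIdeal_top le_top ⟨1, hquot⟩) hx_mem
  simpa using congrFun hx 0

end GenFrattiniSumExample

open Leib in
/-- there exists a 3-dimensional Lie algebra `A` (over a field of
characteristic 0, here `ℝ`) with generalized Frattini ideals `H`, `K` such that
`H + K` is not generalized Frattini. -/
theorem exists_sum_not_genFrattini :
    ∃ (A : Type) (_ : NonUnitalNonAssocRing A) (_ : Module ℝ A)
      (_ : SMulCommClass ℝ A A) (_ : IsScalarTower ℝ A A),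
      (∀ a b c : A, a * (b * c) = a * b * c + b * (a * c)) ∧
      (∀ a : A, a * a = 0) ∧
      Module.finrank ℝ A = 3 ∧
      ∃ H K : Submodule ℝ A, IsIdeal ℝ H ∧ IsIdeal ℝ K ∧
        GenFrattiniN ℝ H ∧ GenFrattiniN ℝ K ∧ ¬ GenFrattiniN ℝ (H ⊔ K) :=
  open GenFrattiniSumExample in
  ⟨L, inferInstance, inferInstance, inferInstance, inferInstance, leibniz, mul_self,
    finrank_eq_three, ℝ ∙ x, ℝ ∙ y, isIdeal_span_x, isIdeal_span_y,
    genFrattiniN_of_x_notMem_or_y_notMem (Or.inr y_notMem_span_x),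
    genFrattiniN_of_x_notMem_or_y_notMem (Or.inl x_notMem_span_y), not_genFrattiniN_sup⟩
end

section
/- Let A be a finite-dimensional Leibniz algebra over an infinite field, H a generalized Frattini ideal of A, and K an ideal of A containing H. Then K/H is a generalized Frattini ideal of A/H if and only if K is a generalized Frattini ideal of A. -/
namespace Leib

variable {F : Type*} [Field F] {A : Type*} [NonUnitalNonAssocRing A] [Module F A]

theorem IsNilp.exists_lcs_le {J : Submodule F A} (hJ : IsNilp F J) (H : Submodule F A) :
    ∃ m, lcs F J m ≤ H :=
  let ⟨m, hm⟩ := hJ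
  ⟨m, hm ▸ bot_le⟩

theorem GenFrattiniN.exists_lcs_le_iff_isNilp {H J : Submodule F A} (hGF : GenFrattiniN F H)
    (hJ : IsIdeal F J) (hHJ : H ≤ J) : (∃ m, lcs F J m ≤ H) ↔ IsNilp F J :=
  ⟨hGF.2 J hJ hHJ, fun hnil => hnil.exists_lcs_le H⟩

end Leib

open Leib in
/-- The generalized Frattini property of `K/H` in `A/H` is expressed via the
correspondence between ideals of `A/H` and ideals of `A` containing `H`:
`K/H` is proper, and every ideal `J ⊇ K` of `A` with `J/K` nilpotent has
`J/H` nilpotent. Since `H` is generalized Frattini, `J/H` is nilpotent exactly when `J`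
is, so the two sides agree clause by clause. -/
theorem quotient_genFrattini_iff_general
    {F : Type*} [Field F] {A : Type*} [NonUnitalNonAssocRing A]
    [Module F A]
    (H K : Submodule F A) (hGF : GenFrattiniN F H)
    (hHK : H ≤ K) :
    (K ≠ ⊤ ∧ ∀ J : Submodule F A, IsIdeal F J → K ≤ J →
        (∃ n, lcs F J n ≤ K) → (∃ m, lcs F J m ≤ H))
      ↔ GenFrattiniN F K :=
  and_congr_right fun _ => forall₂_congr fun _ hJ => forall₂_congr fun hKJ _ =>
    hGF.exists_lcs_le_iff_isNilp hJ (hHK.trans hKJ)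

open Leib in
/-- for a generalized Frattini ideal `H` and an ideal `K ⊇ H`,
`K/H` is generalized Frattini in `A/H` iff `K` is generalized Frattini in `A`.
(The generalized Frattini property of `K/H` in `A/H` is expressed via the
correspondence between ideals of `A/H` and ideals of `A` containing `H`:
`K/H` is proper, and every ideal `J ⊇ K` of `A` with `J/K` nilpotent has
`J/H` nilpotent.) -/
theorem quotient_genFrattini_iff
    {F : Type*} [Field F] [Infinite F] {A : Type*} [NonUnitalNonAssocRing A]
    [Module F A] [SMulCommClass F A A] [IsScalarTower F A A] [Module.Finite F A]
    (leib : ∀ a b c : A, a * (b * c) = a * b * c + b * (a * c))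
    (H K : Submodule F A) (hH : IsIdeal F H) (hGF : GenFrattiniN F H)
    (hK : IsIdeal F K) (hHK : H ≤ K) :
    (K ≠ ⊤ ∧ ∀ J : Submodule F A, IsIdeal F J → K ≤ J →
        (∃ n, lcs F J n ≤ K) → (∃ m, lcs F J m ≤ H))
      ↔ GenFrattiniN F K :=
  quotient_genFrattini_iff_general H K hGF hHK
end

section
/- Let A be a finite-dimensional Leibniz algebra over an infinite field such that the nilradical Nil(A) is a generalized Frattini ideal of A. Then every solvable ideal of A is nilpotent, and hence is contained in Nil(A) and is itself generalized Frattini in A. -/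
/-!
Induct on the derived length of a solvable ideal `S`. If `S·S ≤ N`, then `(S + N)·(S + N) ≤ N`,
so `S + N` is nilpotent because `N` is generalized Frattini, and maximality of `N` gives `S ≤ N`.
-/

namespace Leib

variable {F : Type*} [Field F] {A : Type*} [NonUnitalNonAssocRing A] [Module F A]

lemma mul_mem_mulSpan {S T : Submodule F A} {s t : A} (hs : s ∈ S) (ht : t ∈ T) :
    s * t ∈ mulSpan F S T :=
  Submodule.subset_span ⟨s, hs, t, ht, rfl⟩

lemma mulSpan_mono {S S' T T' : Submodule F A} (hS : S ≤ S') (hT : T ≤ T') :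
    mulSpan F S T ≤ mulSpan F S' T' :=
  mulSpan_le fun _ hs _ ht => mul_mem_mulSpan (hS hs) (hT ht)

lemma lcs_mono {S T : Submodule F A} (h : S ≤ T) : ∀ n, lcs F S n ≤ lcs F T n
  | 0 => h
  | n + 1 => mulSpan_mono h (lcs_mono h n)

lemma IsNilp.mono {S T : Submodule F A} (hT : IsNilp F T) (h : S ≤ T) : IsNilp F S :=
  let ⟨n, hn⟩ := hT
  ⟨n, le_bot_iff.mp (hn ▸ lcs_mono h n)⟩

lemma IsIdeal.sup {S T : Submodule F A} (hS : IsIdeal F S) (hT : IsIdeal F T) :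
    IsIdeal F (S ⊔ T) := by
  intro a x hx
  obtain ⟨s, hs, t, ht, rfl⟩ := Submodule.mem_sup.mp hx
  rw [mul_add, add_mul]
  exact ⟨add_mem (Submodule.mem_sup_left (hS a s hs).1) (Submodule.mem_sup_right (hT a t ht).1),
    add_mem (Submodule.mem_sup_left (hS a s hs).2) (Submodule.mem_sup_right (hT a t ht).2)⟩

lemma lcs_sup_le {J N : Submodule F A} (hN : IsIdeal F N) :
    ∀ k, lcs F (J ⊔ N) k ≤ lcs F J k ⊔ N
  | 0 => le_rfl
  | k + 1 => by
    refine (mulSpan_mono le_rfl (lcs_sup_le hN k)).trans (mulSpan_le ?_)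
    intro s hs t ht
    obtain ⟨j, hj, n, hn, rfl⟩ := Submodule.mem_sup.mp hs
    obtain ⟨u, hu, m, hm, rfl⟩ := Submodule.mem_sup.mp ht
    rw [add_mul, mul_add, add_assoc]
    exact add_mem (Submodule.mem_sup_left (mul_mem_mulSpan hj hu))
      (Submodule.mem_sup_right (add_mem (hN j m hm).1 (hN (u + m) n hn).2))

lemma derSeries_succ' (S : Submodule F A) :
    ∀ n, derSeries F S (n + 1) = derSeries F (mulSpan F S S) n
  | 0 => rfl
  | n + 1 => congrArg (fun T => mulSpan F T T) (derSeries_succ' S n)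

lemma GenFrattiniN.isNilp_of_lcs_le {N J : Submodule F A} (hGF : GenFrattiniN F N)
    (hN : IsIdeal F N) (hJ : IsIdeal F J) {m : ℕ} (hm : lcs F J m ≤ N) : IsNilp F J :=
  (hGF.2 _ (hJ.sup hN) le_sup_right ⟨m, (lcs_sup_le hN m).trans (sup_le hm le_rfl)⟩).mono
    le_sup_left

lemma GenFrattiniN.mono {N H : Submodule F A} (hGF : GenFrattiniN F N) (hN : IsIdeal F N)
    (hHN : H ≤ N) : GenFrattiniN F H :=
  ⟨fun hH => hGF.1 (top_le_iff.mp (hH ▸ hHN)),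
    fun _ hJ _ ⟨_, hm⟩ => hGF.isNilp_of_lcs_le hN hJ (hm.trans hHN)⟩

lemma IsIdeal.mulSpan_self [SMulCommClass F A A] [IsScalarTower F A A]
    (leib : ∀ a b c : A, a * (b * c) = a * b * c + b * (a * c))
    {S : Submodule F A} (hS : IsIdeal F S) : IsIdeal F (mulSpan F S S) := by
  intro a x hx
  induction hx using Submodule.span_induction with
  | mem x hx =>
    obtain ⟨s, hs, t, ht, rfl⟩ := hx
    have right_mul : s * t * a = s * (t * a) - t * (s * a) := by rw [leib s t a]; abel
    rw [leib a s t, right_mul]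
    exact ⟨add_mem (mul_mem_mulSpan (hS a s hs).1 ht) (mul_mem_mulSpan hs (hS a t ht).1),
      sub_mem (mul_mem_mulSpan hs (hS a t ht).2) (mul_mem_mulSpan ht (hS a s hs).2)⟩
  | zero => simp
  | add x y _ _ hx hy =>
    rw [mul_add, add_mul]
    exact ⟨add_mem hx.1 hy.1, add_mem hx.2 hy.2⟩
  | smul r x _ hx =>
    rw [mul_smul_comm, smul_mul_assoc]
    exact ⟨Submodule.smul_mem _ r hx.1, Submodule.smul_mem _ r hx.2⟩

lemma le_of_derSeries_eq_bot [SMulCommClass F A A] [IsScalarTower F A A]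
    (leib : ∀ a b c : A, a * (b * c) = a * b * c + b * (a * c))
    {N : Submodule F A} (hN : IsIdeal F N)
    (hNmax : ∀ M : Submodule F A, IsIdeal F M → IsNilp F M → M ≤ N) (hGF : GenFrattiniN F N) :
    ∀ n, ∀ S : Submodule F A, IsIdeal F S → derSeries F S n = ⊥ → S ≤ N
  | 0, _, _, hS => (le_bot_iff.mpr hS).trans bot_le
  | n + 1, S, hS, hSn => by
    have hS2 : lcs F S 1 ≤ N :=
      le_of_derSeries_eq_bot leib hN hNmax hGF n _ (hS.mulSpan_self leib)
        (derSeries_succ' S n ▸ hSn)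
    exact hNmax S hS (hGF.isNilp_of_lcs_le hN hS hS2)

end Leib

open Leib in
theorem solvable_ideal_nilpotent_of_nil_genFrattini_general
    {F : Type*} [Field F] {A : Type*} [NonUnitalNonAssocRing A]
    [Module F A] [SMulCommClass F A A] [IsScalarTower F A A]
    (leib : ∀ a b c : A, a * (b * c) = a * b * c + b * (a * c))
    (N : Submodule F A) (hN : IsIdeal F N) (hNnilp : IsNilp F N)
    (hNmax : ∀ M : Submodule F A, IsIdeal F M → IsNilp F M → M ≤ N)
    (hGF : GenFrattiniN F N) :
    ∀ S : Submodule F A, IsIdeal F S → IsSolv F S →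
      IsNilp F S ∧ S ≤ N ∧ GenFrattiniN F S := by
  rintro S hS ⟨n, hn⟩
  have hSN : S ≤ N := le_of_derSeries_eq_bot leib hN hNmax hGF n S hS hn
  exact ⟨hNnilp.mono hSN, hSN, hGF.mono hN hSN⟩

open Leib in
/-- if `Nil(A)` is generalized Frattini, then every solvable ideal of `A`
is nilpotent, hence contained in `Nil(A)`, and is itself generalized Frattini. -/
theorem solvable_ideal_nilpotent_of_nil_genFrattini
    {F : Type*} [Field F] [Infinite F] {A : Type*} [NonUnitalNonAssocRing A]
    [Module F A] [SMulCommClass F A A] [IsScalarTower F A A] [Module.Finite F A]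
    (leib : ∀ a b c : A, a * (b * c) = a * b * c + b * (a * c))
    (N : Submodule F A) (hN : IsIdeal F N) (hNnilp : IsNilp F N)
    (hNmax : ∀ M : Submodule F A, IsIdeal F M → IsNilp F M → M ≤ N)
    (hGF : GenFrattiniN F N) :
    ∀ S : Submodule F A, IsIdeal F S → IsSolv F S →
      IsNilp F S ∧ S ≤ N ∧ GenFrattiniN F S :=
  solvable_ideal_nilpotent_of_nil_genFrattini_general leib N hN hNnilp hNmax hGF
end
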